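/- Let V be a real inner product space, let G be a finite group acting on V by linear isometries, let G₀ ⊆ G be a subset, and let η : ℝ → ℝ satisfy η(0) = 0. Suppose x, w ∈ V and g₀ ∈ G are such that ⟨x, g • w⟩ = 0 for every g ∉ G₀ and ⟨g₀ • x, g • w⟩ = 0 for every g ∉ G₀ (localization condition). Then the partially pooled signature is exactly invariant: Σ_{g ∈ G₀} η(⟨g₀ • x, g • w⟩) = Σ_{g ∈ G₀} η(⟨x, g • w⟩). -/

import Mathlib

open RealInnerProductSpace

theorem Finset.sum_comp_mul_left_of_vanishing_off {G M : Type*} [Group G] [AddCommMonoid M]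
    (s : Finset G) (f : G → M) (a : G) (hf : ∀ g ∉ s, f g = 0)
    (hfa : ∀ g ∉ s, f (a * g) = 0) :
    ∑ g ∈ s, f (a * g) = ∑ g ∈ s, f g := by
  have support_subset {φ : G → M} (hφ : ∀ g ∉ s, φ g = 0) : Function.support φ ⊆ s :=
    fun g hg => by_contra fun hgs => hg (hφ g hgs)
  calc ∑ g ∈ s, f (a * g)
      = ∑ᶠ g, f (Equiv.mulLeft a g) := (finsum_eq_sum_of_support_subset _ (support_subset hfa)).symm
    _ = ∑ᶠ g, f g := finsum_comp_equiv _
    _ = ∑ g ∈ s, f g := finsum_eq_sum_of_support_subset _ (support_subset hf)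

theorem inner_map_eq_inner_map_inv_mul {V G : Type*} [NormedAddCommGroup V]
    [InnerProductSpace ℝ V] [Group G] (ρ : G →* (V ≃ₗᵢ[ℝ] V)) (a g : G) (x w : V) :
    ⟪ρ a x, ρ g w⟫ = ⟪x, ρ (a⁻¹ * g) w⟫ := by
  conv_lhs => rw [← mul_inv_cancel_left a g, map_mul]
  exact (ρ a).inner_map_map x (ρ (a⁻¹ * g) w)

theorem partially_pooled_signature_invariant_of_localization_general
    {V : Type*} [NormedAddCommGroup V] [InnerProductSpace ℝ V]
    {G : Type*} [Group G] (ρ : G →* (V ≃ₗᵢ[ℝ] V))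
    (G₀ : Finset G) (η : ℝ → ℝ) (hη : η 0 = 0)
    (x w : V) (g₀ : G)
    (hloc : ∀ g ∉ G₀, ⟪x, ρ g w⟫ = 0)
    (hloc' : ∀ g ∉ G₀, ⟪ρ g₀ x, ρ g w⟫ = 0) :
    (∑ g ∈ G₀, η ⟪ρ g₀ x, ρ g w⟫) = ∑ g ∈ G₀, η ⟪x, ρ g w⟫ := by
  simp only [inner_map_eq_inner_map_inv_mul ρ g₀] at hloc' ⊢
  exact G₀.sum_comp_mul_left_of_vanishing_off (fun g => η ⟪x, ρ g w⟫) g₀⁻¹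
    (fun g hg => by simp only [hloc g hg, hη]) (fun g hg => by simp only [hloc' g hg, hη])

/-- Localization implies exact invariance of the partially pooled signature: if the dot
products of `x` and of `g₀ • x` with all transformed templates `g • w` outside the pooling
range `G₀` vanish, and `η(0) = 0`, then
`Σ_{g ∈ G₀} η(⟨g₀ • x, g • w⟩) = Σ_{g ∈ G₀} η(⟨x, g • w⟩)`. -/
theorem partially_pooled_signature_invariant_of_localization
    {V : Type*} [NormedAddCommGroup V] [InnerProductSpace ℝ V]
    {G : Type*} [Group G] [Fintype G] (ρ : G →* (V ≃ₗᵢ[ℝ] V))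
    (G₀ : Finset G) (η : ℝ → ℝ) (hη : η 0 = 0)
    (x w : V) (g₀ : G)
    (hloc : ∀ g ∉ G₀, ⟪x, ρ g w⟫ = 0)
    (hloc' : ∀ g ∉ G₀, ⟪ρ g₀ x, ρ g w⟫ = 0) :
    (∑ g ∈ G₀, η ⟪ρ g₀ x, ρ g w⟫) = ∑ g ∈ G₀, η ⟪x, ρ g w⟫ :=
  partially_pooled_signature_invariant_of_localization_general ρ G₀ η hη x w g₀ hloc hloc'
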